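/- arXiv:2105.08278 — 2 statements merged into one kernel-verified Lean document; each statement's English description precedes it below -/
import Mathlib

section
/- Let f, g₁, …, g_l, h₁, …, h_m : ℝⁿ → ℝ be C^p functions (p ≥ 2), S = {x : g₁(x) ≥ 0, …, g_l(x) ≥ 0, h₁(x) = 0, …, h_m(x) = 0} nonempty, and f nonnegative on S. Let x* ∈ S with f(x*) = 0, and assume S is regular at x* and the strict complementarity and second-order sufficiency conditions hold at x*. Then there exist an open neighbourhood U of x* and C^{p−2} functions φ₀, φ₁, …, φ_l, ψ₁, …, ψ_m : U → ℝ, with each φᵢ a sum of squares of C^{p−2} functions on U, such that f = φ₀ + Σᵢ φᵢ gᵢ + Σⱼ ψⱼ hⱼ on U. -/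
open intervalIntegral MeasureTheory Metric Set Topology Filter
set_option synthInstance.maxHeartbeats 1000000
set_option maxHeartbeats 1000000

variable {X : Type} [NormedAddCommGroup X] [NormedSpace ℝ X] [FiniteDimensional ℝ X]

/-- partial derivative in the second variable -/
noncomputable def pderX {E : Type} [NormedAddCommGroup E] [NormedSpace ℝ E]
    (F : ℝ × X → E) (t : ℝ) (x : X) : X →L[ℝ] E :=
  (fderiv ℝ F (t, x)).comp (ContinuousLinearMap.inr ℝ ℝ X)

theorem hasFDerivAt_parint {E : Type} [NormedAddCommGroup E] [NormedSpace ℝ E] [CompleteSpace E]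
    (F : ℝ × X → E) (hF : ContDiff ℝ 1 F) (x₀ : X) :
    HasFDerivAt (fun x => ∫ t in (0:ℝ)..1, F (t, x)) (∫ t in (0:ℝ)..1, pderX F t x₀) x₀ := by
  have hFc : Continuous F := hF.continuous
  have hFd : Continuous (fderiv ℝ F) := hF.continuous_fderiv one_ne_zero
  have hpc : Continuous fun p : ℝ × X => pderX F p.1 p.2 := by
    exact (hFd.comp continuous_id).clm_comp continuous_const
  obtain ⟨C, hC⟩ : ∃ C, ∀ p ∈ Icc (0:ℝ) 1 ×ˢ closedBall x₀ 1, ‖pderX F p.1 p.2‖ ≤ C := by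
    rcases (isCompact_Icc.prod (isCompact_closedBall x₀ 1)).exists_bound_of_continuousOn
      hpc.continuousOn with ⟨C, hC⟩
    exact ⟨C, hC⟩
  have key := intervalIntegral.hasFDerivAt_integral_of_dominated_of_fderiv_le
    (F := fun x t => F (t, x)) (F' := fun x t => pderX F t x) (x₀ := x₀)
    (a := (0:ℝ)) (b := 1) (μ := volume) (bound := fun _ => C) (s := ball x₀ 1) (ball_mem_nhds x₀ one_pos)
    ?_ ?_ ?_ ?_ ?_ ?_
  · exact key
  · exact Filter.Eventually.of_forall fun x =>
      ((hFc.comp (continuous_id.prodMk continuous_const)).aestronglyMeasurable)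
  · exact (hFc.comp (continuous_id.prodMk continuous_const)).intervalIntegrable 0 1
  · exact ((hpc.comp (continuous_id.prodMk continuous_const)).aestronglyMeasurable)
  · refine Filter.Eventually.of_forall fun t ht x hx => hC (t, x) ?_
    have : t ∈ Icc (0:ℝ) 1 := by
      rcases ht with ⟨h1, h2⟩
      constructor
      · simp at h1 h2 ⊢; linarith [h1]
      · simp at h1 h2 ⊢; linarith [h2]
    exact ⟨this, ball_subset_closedBall hx⟩
  · exact intervalIntegrable_const
  · refine Filter.Eventually.of_forall fun t ht x hx => ?_
    have hdF : HasFDerivAt F (fderiv ℝ F (t, x)) (t, x) :=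
      (hF.differentiable one_ne_zero (t, x)).hasFDerivAt
    have hmk : HasFDerivAt (fun y : X => ((t : ℝ), y))
        (ContinuousLinearMap.inr ℝ ℝ X) x := by
      exact HasFDerivAt.prodMk (hasFDerivAt_const t x) (hasFDerivAt_id x)
    exact hdF.comp x hmk

theorem contDiff_parint (q : ℕ) :
    ∀ {E : Type} [NormedAddCommGroup E] [NormedSpace ℝ E] [CompleteSpace E]
      (F : ℝ × X → E), ContDiff ℝ q F →
      ContDiff ℝ q (fun x => ∫ t in (0:ℝ)..1, F (t, x)) := by
  induction q with
  | zero =>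
    intro E _ _ _ F hF
    rw [show ((0:ℕ) : WithTop ℕ∞) = 0 by norm_cast]
    rw [contDiff_zero]
    exact intervalIntegral.continuous_parametric_intervalIntegral_of_continuous'
      (f := fun x t => F (t, x))
      (by exact hF.continuous.comp (continuous_swap)) 0 1
  | succ q ih =>
    intro E _ _ _ F hF
    have hq1 : (1 : WithTop ℕ∞) ≤ ((q+1 : ℕ) : WithTop ℕ∞) := by
      exact_mod_cast Nat.succ_le_succ q.zero_le
    have hcast : ((q+1 : ℕ) : WithTop ℕ∞) = (q : WithTop ℕ∞) + 1 := by push_cast; ring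
    rw [hcast, contDiff_succ_iff_fderiv]
    refine ⟨fun x => (hasFDerivAt_parint F (hF.of_le hq1) x).differentiableAt, ?_, ?_⟩
    · intro hω; exact absurd hω (by simp)
    · have heq : (fderiv ℝ fun x => ∫ t in (0:ℝ)..1, F (t, x))
          = fun x => ∫ t in (0:ℝ)..1, pderX F t x :=
        funext fun x => (hasFDerivAt_parint F (hF.of_le hq1) x).fderiv
      rw [heq]
      exact ih (fun p => pderX F p.1 p.2)
        ((hF.fderiv_right (by exact_mod_cast le_rfl)).clm_comp contDiff_const)

theorem hadamard {n : ℕ} (q : ℕ) (hq : 1 ≤ q) (G : (Fin n → ℝ) → ℝ) (hG : ContDiff ℝ q G)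
    (xs : Fin n → ℝ) :
    ∃ a : Fin n → (Fin n → ℝ) → ℝ,
      (∀ k, ContDiff ℝ (q-1 : ℕ) (a k)) ∧
      (∀ k, a k xs = fderiv ℝ G xs (Pi.single k 1)) ∧
      (2 ≤ q → ∀ k k' : Fin n, fderiv ℝ (a k) xs (Pi.single k' 1)
         = (1/2) * fderiv ℝ (fderiv ℝ G) xs (Pi.single k' 1) (Pi.single k 1)) ∧
      (∀ x, G x = G xs + ∑ k, (x k - xs k) * a k x) := by
  classical
  set ψ : ℝ × (Fin n → ℝ) → (Fin n → ℝ) := fun p => xs + p.1 • (p.2 - xs) with hψ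
  have hψc : ContDiff ℝ (q-1 : ℕ) ψ :=
    contDiff_const.add (contDiff_fst.smul (contDiff_snd.sub contDiff_const))
  have hDG : ContDiff ℝ (q-1 : ℕ) (fderiv ℝ G) := by
    apply hG.fderiv_right
    have : ((q-1 : ℕ) : WithTop ℕ∞) + 1 = ((q : ℕ) : WithTop ℕ∞) := by
      have : q - 1 + 1 = q := Nat.succ_pred_eq_of_pos hq
      exact_mod_cast congrArg (Nat.cast : ℕ → WithTop ℕ∞) this
    rw [this]
  set Fk : Fin n → ℝ × (Fin n → ℝ) → ℝ := fun k p => fderiv ℝ G (ψ p) (Pi.single k 1) with hFk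
  have hFkc : ∀ k, ContDiff ℝ (q-1 : ℕ) (Fk k) :=
    fun k => (hDG.comp hψc).clm_apply contDiff_const
  set a : Fin n → (Fin n → ℝ) → ℝ := fun k x => ∫ t in (0:ℝ)..1, Fk k (t, x) with ha
  have hψxs : ∀ t, ψ (t, xs) = xs := by intro t; simp [hψ]
  refine ⟨a, fun k => contDiff_parint _ _ (hFkc k), ?_, ?_, ?_⟩
  · intro k
    have : ∀ t : ℝ, Fk k (t, xs) = fderiv ℝ G xs (Pi.single k 1) := by
      intro t; simp [hFk, hψxs]
    simp only [ha, this, intervalIntegral.integral_const]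
    simp
  · intro hq2 k k'
    -- derivative of a k at xs
    have h1q : (1 : WithTop ℕ∞) ≤ ((q - 1 : ℕ) : WithTop ℕ∞) := by
      exact_mod_cast Nat.le_sub_one_of_lt hq2
    have hd := (hasFDerivAt_parint (Fk k) ((hFkc k).of_le h1q) xs).fderiv
    rw [hd]
    have hint : IntervalIntegrable (fun t => pderX (Fk k) t xs) MeasureTheory.volume 0 1 := by
      have : Continuous fun t : ℝ => pderX (Fk k) t xs := by
        have : Continuous (fderiv ℝ (Fk k)) := ((hFkc k).of_le h1q).continuous_fderiv one_ne_zero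
        exact ((this.comp (continuous_id.prodMk continuous_const)).clm_comp continuous_const)
      exact this.intervalIntegrable 0 1
    rw [ContinuousLinearMap.intervalIntegral_apply hint]
    set B := fderiv ℝ (fderiv ℝ G) xs with hB
    have hpd : ∀ t : ℝ, (pderX (Fk k) t xs) (Pi.single k' 1)
        = t * B (Pi.single k' 1) (Pi.single k 1) := by
      intro t
      -- compute fderiv of Fk k at (t, xs)
      have hψd : HasFDerivAt ψ
          ((t • ContinuousLinearMap.snd ℝ ℝ (Fin n → ℝ)) +
            (ContinuousLinearMap.fst ℝ ℝ (Fin n → ℝ)).smulRight (xs - xs)) (t, xs) := by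
        have h1 : HasFDerivAt (fun p : ℝ × (Fin n → ℝ) => p.1)
            (ContinuousLinearMap.fst ℝ ℝ (Fin n → ℝ)) (t, xs) := hasFDerivAt_fst
        have h2 : HasFDerivAt (fun p : ℝ × (Fin n → ℝ) => p.2 - xs)
            (ContinuousLinearMap.snd ℝ ℝ (Fin n → ℝ)) (t, xs) :=
          hasFDerivAt_snd.sub_const xs
        have := (h1.smul h2).const_add xs
        simpa [hψ] using this
      have hBd : HasFDerivAt (fderiv ℝ G) B xs := by
        have : DifferentiableAt ℝ (fderiv ℝ G) xs := by
          apply (hDG.differentiable ?_).differentiableAt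
          exact (lt_of_lt_of_le zero_lt_one h1q).ne'
        exact this.hasFDerivAt
      have houter : HasFDerivAt (fun y => fderiv ℝ G y (Pi.single k 1))
          (B.flip (Pi.single k 1)) xs := by
        have := hBd.clm_apply (hasFDerivAt_const (Pi.single k (1:ℝ)) xs)
        simpa using this
      have houter' : HasFDerivAt (fun y => fderiv ℝ G y (Pi.single k 1))
          (B.flip (Pi.single k 1)) (ψ (t, xs)) := by rw [hψxs t]; exact houter
      have hcomp : HasFDerivAt (Fk k)
          ((B.flip (Pi.single k 1)).comp
            ((t • ContinuousLinearMap.snd ℝ ℝ (Fin n → ℝ)) +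
              (ContinuousLinearMap.fst ℝ ℝ (Fin n → ℝ)).smulRight (xs - xs))) (t, xs) := by
        simpa [Function.comp_def] using houter'.comp (t, xs) hψd
      rw [pderX, hcomp.fderiv]
      simp only [ContinuousLinearMap.coe_comp', Function.comp_apply,
        ContinuousLinearMap.inr_apply, ContinuousLinearMap.add_apply,
        ContinuousLinearMap.smul_apply, ContinuousLinearMap.coe_snd',
        ContinuousLinearMap.smulRight_apply, ContinuousLinearMap.coe_fst',
        ContinuousLinearMap.flip_apply, sub_self, zero_smul, smul_zero, add_zero,
        _root_.map_smul, smul_eq_mul]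
    rw [intervalIntegral.integral_congr (g := fun t => t * B (Pi.single k' 1) (Pi.single k 1))
      (fun t _ => hpd t)]
    rw [intervalIntegral.integral_mul_const, integral_id]
    ring
  · intro x
    have hpath : ∀ t : ℝ, HasDerivAt (fun s => G (ψ (s, x)))
        ((fderiv ℝ G (ψ (t, x))) (x - xs)) t := by
      intro t
      have hG1 : DifferentiableAt ℝ G (ψ (t, x)) :=
        (hG.differentiable (lt_of_lt_of_le zero_lt_one (by exact_mod_cast hq : (1 : WithTop ℕ∞) ≤ q)).ne').differentiableAt
      have hpd : HasDerivAt (fun s : ℝ => ψ (s, x)) (x - xs) t := by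
        have : HasDerivAt (fun s : ℝ => s • (x - xs)) ((1:ℝ) • (x - xs)) t := by
          simpa using (hasDerivAt_id t).smul_const (x - xs)
        simpa [hψ] using this.const_add xs
      exact (hG1.hasFDerivAt.comp_hasDerivAt t hpd)
    have hcont : Continuous fun t : ℝ => (fderiv ℝ G (ψ (t, x))) (x - xs) := by
      have h1 : ContDiff ℝ ((q-1:ℕ) : WithTop ℕ∞) fun p : ℝ × (Fin n → ℝ) =>
          (fderiv ℝ G (ψ p)) (x - xs) := (hDG.comp hψc).clm_apply contDiff_const
      exact h1.continuous.comp (continuous_id.prodMk continuous_const)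
    have key := intervalIntegral.integral_eq_sub_of_hasDerivAt
      (f := fun s => G (ψ (s, x))) (fun t _ => hpath t)
      ((hcont.intervalIntegrable 0 1))
    have hψ1 : ψ (1, x) = x := by simp [hψ]
    have hψ0 : ψ (0, x) = xs := by simp [hψ]
    simp only [hψ1, hψ0] at key
    -- rewrite integrand as sum over coordinates
    have hexp : ∀ t : ℝ, (fderiv ℝ G (ψ (t, x))) (x - xs)
        = ∑ k, (x k - xs k) * Fk k (t, x) := by
      intro t
      have hv : (x - xs) = ∑ k : Fin n, (x k - xs k) • (Pi.single k 1 : Fin n → ℝ) := by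
        ext j
        simp [Finset.sum_apply, Pi.single_apply]
      rw [hv, map_sum]
      exact Finset.sum_congr rfl fun k _ => by
        rw [(fderiv ℝ G (ψ (t, x))).map_smul]; simp [hFk, smul_eq_mul]
    rw [intervalIntegral.integral_congr (fun t _ => hexp t)] at key
    have hsum : (∫ t in (0:ℝ)..1, ∑ k : Fin n, (x k - xs k) * Fk k (t, x))
        = ∑ k : Fin n, ∫ t in (0:ℝ)..1, (x k - xs k) * Fk k (t, x) := by
      exact intervalIntegral.integral_finset_sum (fun k _ =>
        (continuous_const.mul ((hFkc k).continuous.comp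
          (continuous_id.prodMk continuous_const))).intervalIntegrable 0 1)
    rw [hsum] at key
    have : ∀ k, ∫ t in (0:ℝ)..1, (x k - xs k) * Fk k (t, x)
        = (x k - xs k) * a k x := fun k => intervalIntegral.integral_const_mul _ _
    simp only [this] at key
    linarith [key]

theorem quad_expand (d : ℕ) (Mm : Fin (d+1) → Fin (d+1) → ℝ)
    (hsym : ∀ a b, Mm a b = Mm b a) (v : Fin (d+1) → ℝ) (hα : Mm 0 0 ≠ 0) :
    ∑ a, ∑ b, v a * Mm a b * v b
      = Mm 0 0 * (v 0 + (∑ b : Fin d, Mm 0 b.succ * v b.succ) / Mm 0 0)^2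
        + ∑ a : Fin d, ∑ b : Fin d,
            v a.succ * (Mm a.succ b.succ - Mm 0 a.succ * Mm 0 b.succ / Mm 0 0) * v b.succ := by
  set α := Mm 0 0 with hαdef
  set s := ∑ b : Fin d, Mm 0 b.succ * v b.succ with hs
  set r := ∑ a : Fin d, ∑ b : Fin d, v a.succ * Mm a.succ b.succ * v b.succ with hr
  have hA : ∑ b : Fin d, v 0 * Mm 0 b.succ * v b.succ = v 0 * s := by
    rw [hs, Finset.mul_sum]; exact Finset.sum_congr rfl fun b _ => by ring
  have hB : ∑ a : Fin d, v a.succ * Mm a.succ 0 * v 0 = v 0 * s := by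
    rw [hs, Finset.mul_sum]
    exact Finset.sum_congr rfl fun a _ => by rw [hsym a.succ 0]; ring
  have hLHS : ∑ a, ∑ b, v a * Mm a b * v b = α * v 0 * v 0 + 2 * (v 0 * s) + r := by
    rw [Fin.sum_univ_succ]
    simp only [Fin.sum_univ_succ]
    rw [Finset.sum_add_distrib, hA, hB, hr]
    ring
  have hC : ∑ a : Fin d, ∑ b : Fin d,
      v a.succ * (Mm 0 a.succ * Mm 0 b.succ / α) * v b.succ = s * s / α := by
    have : ∀ a : Fin d, ∑ b : Fin d, v a.succ * (Mm 0 a.succ * Mm 0 b.succ / α) * v b.succ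
        = (Mm 0 a.succ * v a.succ) * s / α := by
      intro a
      rw [hs, Finset.mul_sum, Finset.sum_div]
      exact Finset.sum_congr rfl fun b _ => by ring
    rw [Finset.sum_congr rfl fun a _ => this a]
    rw [← Finset.sum_div, ← Finset.sum_mul]
  have hD : ∑ a : Fin d, ∑ b : Fin d,
      v a.succ * (Mm a.succ b.succ - Mm 0 a.succ * Mm 0 b.succ / α) * v b.succ
      = r - s * s / α := by
    have : ∀ a : Fin d, ∀ b : Fin d,
        v a.succ * (Mm a.succ b.succ - Mm 0 a.succ * Mm 0 b.succ / α) * v b.succ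
        = v a.succ * Mm a.succ b.succ * v b.succ
          - v a.succ * (Mm 0 a.succ * Mm 0 b.succ / α) * v b.succ := fun a b => by ring
    simp only [this]
    rw [← hC, hr]
    rw [← Finset.sum_sub_distrib]
    exact Finset.sum_congr rfl fun a _ => by rw [← Finset.sum_sub_distrib]
  rw [hLHS, hD]
  field_simp
  ring

theorem cholesky {X : Type} [NormedAddCommGroup X] [NormedSpace ℝ X] (q : ℕ) :
    ∀ (d : ℕ) (U : Set X) (M : X → Fin d → Fin d → ℝ) (w : Fin d → X → ℝ),
    (∀ a b, ContDiffOn ℝ q (fun x => M x a b) U) →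
    (∀ x ∈ U, ∀ a b, M x a b = M x b a) →
    (∀ x ∈ U, ∀ v : Fin d → ℝ, v ≠ 0 → 0 < ∑ a, ∑ b, v a * M x a b * v b) →
    (∀ a, ContDiffOn ℝ q (w a) U) →
    ∃ σ : Fin d → X → ℝ, (∀ a, ContDiffOn ℝ q (σ a) U) ∧
      ∀ x ∈ U, ∑ a, ∑ b, w a x * M x a b * w b x = ∑ a, (σ a x)^2 := by
  intro d
  induction d with
  | zero =>
    intro U M w _ _ _ _
    exact ⟨Fin.elim0, fun a => a.elim0, fun x _ => by simp⟩
  | succ d ih =>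
    intro U M w hMc hsym hpd hwc
    have hα : ∀ x ∈ U, 0 < M x 0 0 := by
      intro x hx
      have h0 : (Pi.single 0 1 : Fin (d+1) → ℝ) ≠ 0 := by
        intro hcon
        have := congrFun hcon 0
        simp [Pi.single_apply] at this
      have := hpd x hx (Pi.single 0 1) h0
      simpa [Pi.single_apply, ite_mul, mul_ite, Finset.sum_ite_eq'] using this
    set α : X → ℝ := fun x => M x 0 0 with hαdef
    set S : X → ℝ := fun x => ∑ b : Fin d, M x 0 b.succ * w b.succ x with hS
    set M' : X → Fin d → Fin d → ℝ :=
      fun x a b => M x a.succ b.succ - M x 0 a.succ * M x 0 b.succ / M x 0 0 with hM'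
    set w' : Fin d → X → ℝ := fun b => w b.succ with hw'
    -- the key pointwise expansion
    have hexp : ∀ x ∈ U, ∀ v : Fin (d+1) → ℝ,
        ∑ a, ∑ b, v a * M x a b * v b
          = M x 0 0 * (v 0 + (∑ b : Fin d, M x 0 b.succ * v b.succ) / M x 0 0)^2
            + ∑ a : Fin d, ∑ b : Fin d, v a.succ * M' x a b * v b.succ := by
      intro x hx v
      exact quad_expand d (M x) (hsym x hx) v (hα x hx).ne'
    -- M' is C^q, symmetric, positive definite on U
    have hM'c : ∀ a b, ContDiffOn ℝ q (fun x => M' x a b) U := by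
      intro a b
      exact (hMc a.succ b.succ).sub
        (((hMc 0 a.succ).mul (hMc 0 b.succ)).div (hMc 0 0)
          (fun x hx => (hα x hx).ne'))
    have hM'sym : ∀ x ∈ U, ∀ a b, M' x a b = M' x b a := by
      intro x hx a b
      simp only [hM']
      rw [hsym x hx a.succ b.succ]
      ring
    have hM'pd : ∀ x ∈ U, ∀ u : Fin d → ℝ, u ≠ 0 →
        0 < ∑ a, ∑ b, u a * M' x a b * u b := by
      intro x hx u hu
      set v : Fin (d+1) → ℝ :=
        Fin.cons (-(∑ b : Fin d, M x 0 b.succ * u b) / M x 0 0) u with hv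
      have hvne : v ≠ 0 := by
        intro hcon
        apply hu
        funext b
        have := congrFun hcon b.succ
        simpa [hv] using this
      have := hpd x hx v hvne
      rw [hexp x hx v] at this
      have hv0 : v 0 = -(∑ b : Fin d, M x 0 b.succ * v b.succ) / M x 0 0 := by
        simp [hv]
      rw [hv0] at this
      have hz : M x 0 0 * (-(∑ b : Fin d, M x 0 b.succ * v b.succ) / M x 0 0
          + (∑ b : Fin d, M x 0 b.succ * v b.succ) / M x 0 0) ^ 2 = 0 := by
        rw [neg_div, neg_add_cancel]
        simp
      rw [hz, zero_add] at this
      have : 0 < ∑ a, ∑ b, v a.succ * M' x a b * v b.succ := this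
      simpa [hv] using this
    obtain ⟨τ, hτc, hτ⟩ := ih U M' w' hM'c hM'sym hM'pd (fun a => hwc a.succ)
    set σ0 : X → ℝ := fun x => Real.sqrt (M x 0 0) * (w 0 x + S x / M x 0 0) with hσ0
    have hσ0c : ContDiffOn ℝ q σ0 U := by
      have hsq : ContDiffOn ℝ q (fun x => Real.sqrt (M x 0 0)) U :=
        (hMc 0 0).sqrt (fun x hx => (hα x hx).ne')
      have hSc : ContDiffOn ℝ q S U := by
        apply ContDiffOn.sum
        intro b _
        exact (hMc 0 b.succ).mul (hwc b.succ)
      exact hsq.mul ((hwc 0).add (hSc.div (hMc 0 0) (fun x hx => (hα x hx).ne')))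
    refine ⟨(Fin.cons σ0 τ : Fin (d+1) → X → ℝ), ?_, ?_⟩
    · intro a
      refine Fin.cases ?_ ?_ a
      · simpa using hσ0c
      · intro b; simpa using hτc b
    · intro x hx
      rw [hexp x hx (fun a => w a x)]
      rw [Fin.sum_univ_succ (f := fun a => ((Fin.cons σ0 τ : Fin (d+1) → X → ℝ) a x)^2)]
      simp only [Fin.cons_zero, Fin.cons_succ]
      have h1 : σ0 x ^ 2 = M x 0 0 * (w 0 x + S x / M x 0 0) ^ 2 := by
        rw [hσ0, mul_pow, Real.sq_sqrt (hα x hx).le]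
      rw [h1, ← hτ x hx]

theorem finsler {n l m : ℕ} (B : (Fin n → ℝ) →L[ℝ] (Fin n → ℝ) →L[ℝ] ℝ)
    (w : Fin l → ℝ) (hw : ∀ i, w i = 0 ∨ w i = 1)
    (L : Fin l → ((Fin n → ℝ) →L[ℝ] ℝ)) (N : Fin m → ((Fin n → ℝ) →L[ℝ] ℝ))
    (hpos : ∀ v : Fin n → ℝ, v ≠ 0 → (∀ i, w i ≠ 0 → L i v = 0) → (∀ j, N j v = 0) →
      0 < B v v) :
    ∃ c : ℝ, 0 < c ∧ ∀ v : Fin n → ℝ, v ≠ 0 →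
      0 < B v v + c * (∑ i, w i * (L i v)^2 + ∑ j, (N j v)^2) := by
  classical
  set Q : (Fin n → ℝ) → ℝ := fun v => B v v with hQ
  set R : (Fin n → ℝ) → ℝ := fun v => ∑ i, w i * (L i v)^2 + ∑ j, (N j v)^2 with hR
  have hRnn : ∀ v, 0 ≤ R v := by
    intro v
    apply add_nonneg
    · apply Finset.sum_nonneg
      intro i _
      rcases hw i with h | h <;> simp [h] <;> positivity
    · exact Finset.sum_nonneg fun j _ => sq_nonneg _
  have hQc : Continuous Q := B.continuous.clm_apply continuous_id
  have hRc : Continuous R := by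
    apply Continuous.add
    · exact continuous_finset_sum _ fun i _ =>
        continuous_const.mul (((L i).continuous).pow 2)
    · exact continuous_finset_sum _ fun j _ => ((N j).continuous).pow 2
  have hLs : ∀ (s : ℝ) (v : Fin n → ℝ) (T : (Fin n → ℝ) →L[ℝ] ℝ), T (s • v) = s * T v := by
    intro s v T; rw [T.map_smul]; simp [smul_eq_mul]
  have hQhom : ∀ (s : ℝ) (v), Q (s • v) = s^2 * Q v := by
    intro s v
    simp only [hQ]
    rw [B.map_smul, ContinuousLinearMap.smul_apply, (B v).map_smul]
    simp [smul_eq_mul]; ring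
  have hRhom : ∀ (s : ℝ) (v), R (s • v) = s^2 * R v := by
    intro s v
    simp only [hR, hLs s v]
    rw [mul_add, Finset.mul_sum, Finset.mul_sum]
    congr 1 <;> exact Finset.sum_congr rfl fun _ _ => by ring
  by_contra hcon
  push_neg at hcon
  have hex : ∀ k : ℕ, ∃ u : Fin n → ℝ, ‖u‖ = 1 ∧ Q u + (k+1 : ℝ) * R u ≤ 0 := by
    intro k
    obtain ⟨v, hvne, hvle⟩ := hcon (k+1 : ℝ) (by positivity)
    refine ⟨‖v‖⁻¹ • v, ?_, ?_⟩
    · rw [norm_smul, norm_inv, norm_norm, inv_mul_cancel₀ (norm_ne_zero_iff.2 hvne)]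
    · rw [hQhom, hRhom]
      have h2 : (0:ℝ) ≤ (‖v‖⁻¹)^2 := sq_nonneg _
      calc (‖v‖⁻¹)^2 * Q v + (k+1:ℝ) * ((‖v‖⁻¹)^2 * R v)
          = (‖v‖⁻¹)^2 * (Q v + (k+1:ℝ) * R v) := by ring
        _ ≤ 0 := mul_nonpos_of_nonneg_of_nonpos h2 hvle
  choose u hu1 hule using hex
  have humem : ∀ k, u k ∈ Metric.sphere (0 : Fin n → ℝ) 1 := by
    intro k; rw [mem_sphere_zero_iff_norm]; exact hu1 k
  obtain ⟨z, hzmem, φ, hφmono, hφtend⟩ :=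
    (isCompact_sphere (0 : Fin n → ℝ) 1).tendsto_subseq humem
  obtain ⟨C, hC⟩ := (isCompact_sphere (0 : Fin n → ℝ) 1).exists_bound_of_continuousOn
    hQc.continuousOn
  have hC0 : 0 ≤ C := le_trans (norm_nonneg _) (hC z hzmem)
  have hzne : z ≠ 0 := by
    intro hz
    rw [hz, mem_sphere_zero_iff_norm, norm_zero] at hzmem
    norm_num at hzmem
  have hQtend : Filter.Tendsto (fun k => Q (u (φ k))) Filter.atTop (𝓝 (Q z)) :=
    (hQc.tendsto z).comp hφtend
  have hRtend : Filter.Tendsto (fun k => R (u (φ k))) Filter.atTop (𝓝 (R z)) :=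
    (hRc.tendsto z).comp hφtend
  have hRle : ∀ k : ℕ, R (u (φ k)) ≤ C / (k+1 : ℝ) := by
    intro k
    have h1 := hule (φ k)
    have hQb : -C ≤ Q (u (φ k)) := by
      have := hC (u (φ k)) (humem (φ k))
      rw [Real.norm_eq_abs, abs_le] at this
      exact this.1
    have h2 : (φ k + 1 : ℝ) * R (u (φ k)) ≤ C := by nlinarith
    have h3 : (k + 1 : ℝ) * R (u (φ k)) ≤ C := by
      have hk : (k + 1 : ℝ) ≤ (φ k + 1 : ℝ) := by
        have h : k ≤ φ k := hφmono.le_apply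
        have := (Nat.cast_le (α := ℝ)).mpr h
        linarith
      nlinarith [hRnn (u (φ k))]
    rw [le_div_iff₀ (by positivity : (0:ℝ) < (k+1:ℝ))]
    linarith
  have hCtend : Filter.Tendsto (fun k : ℕ => C / (k+1 : ℝ)) Filter.atTop (𝓝 0) := by
    apply Filter.Tendsto.div_atTop tendsto_const_nhds
    exact Filter.tendsto_atTop_add_const_right _ 1 tendsto_natCast_atTop_atTop
  have hRz0 : R z = 0 :=
    le_antisymm (le_of_tendsto_of_tendsto' hRtend hCtend hRle)
      (hRnn z)
  have hQz : Q z ≤ 0 := by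
    refine le_of_tendsto hQtend (Filter.Eventually.of_forall fun k => ?_)
    have := hule (φ k)
    nlinarith [hRnn (u (φ k)), (by positivity : (0:ℝ) < (φ k + 1 : ℝ))]
  -- from R z = 0 deduce the constraints
  have hRz0' : (∑ i, w i * (L i z)^2) + ∑ j, (N j z)^2 = 0 := hRz0
  have hsplit : (∑ i, w i * (L i z)^2 = 0) ∧ (∑ j, (N j z)^2 = 0) := by
    have h1 : 0 ≤ ∑ i, w i * (L i z)^2 := Finset.sum_nonneg fun i _ => by
      rcases hw i with h | h <;> simp [h] <;> positivity
    have h2 : 0 ≤ ∑ j, (N j z)^2 := Finset.sum_nonneg fun j _ => sq_nonneg _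
    constructor
    · linarith
    · linarith
  have hLz : ∀ i, w i ≠ 0 → L i z = 0 := by
    intro i hwi
    have := (Finset.sum_eq_zero_iff_of_nonneg (fun i _ => by
      rcases hw i with h | h <;> simp [h] <;> positivity)).1 hsplit.1 i (Finset.mem_univ i)
    rcases hw i with h | h
    · exact absurd h hwi
    · rw [h, one_mul] at this
      exact pow_eq_zero_iff (n := 2) (by norm_num) |>.1 this
  have hNz : ∀ j, N j z = 0 := by
    intro j
    have := (Finset.sum_eq_zero_iff_of_nonneg (fun j _ => sq_nonneg _)).1
      hsplit.2 j (Finset.mem_univ j)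
    exact pow_eq_zero_iff (n := 2) (by norm_num) |>.1 this
  exact absurd (hpos z hzne hLz hNz) (not_lt.2 hQz)

theorem clm_bilin_expand {n : ℕ} (T : (Fin n → ℝ) →L[ℝ] (Fin n → ℝ) →L[ℝ] ℝ)
    (u v : Fin n → ℝ) :
    T u v = ∑ k, ∑ k', u k * T (Pi.single k 1) (Pi.single k' 1) * v k' := by
  have hrep : ∀ z : Fin n → ℝ, z = ∑ k : Fin n, z k • (Pi.single k 1 : Fin n → ℝ) := by
    intro z; ext j; simp [Finset.sum_apply, Pi.single_apply]
  calc T u v = ∑ k, u k * (T (Pi.single k 1) v) := by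
        conv_lhs => rw [hrep u]
        rw [map_sum, ContinuousLinearMap.sum_apply]
        refine Finset.sum_congr rfl fun k _ => ?_
        rw [T.map_smul, ContinuousLinearMap.smul_apply, smul_eq_mul]
    _ = ∑ k, ∑ k', u k * T (Pi.single k 1) (Pi.single k' 1) * v k' := by
        refine Finset.sum_congr rfl fun k _ => ?_
        conv_lhs => rw [hrep v]
        rw [map_sum, Finset.mul_sum]
        refine Finset.sum_congr rfl fun k' _ => ?_
        rw [(T _).map_smul, smul_eq_mul]
        ring

theorem pd_nbhd {n : ℕ} (Mm : (Fin n → ℝ) → Fin n → Fin n → ℝ) (xs : Fin n → ℝ)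
    (hcont : ∀ k k', Continuous (fun x => Mm x k k'))
    (hpd : ∀ v : Fin n → ℝ, v ≠ 0 → 0 < ∑ k, ∑ k', v k * Mm xs k k' * v k') :
    ∃ U₀ : Set (Fin n → ℝ), IsOpen U₀ ∧ xs ∈ U₀ ∧
      ∀ x ∈ U₀, ∀ v : Fin n → ℝ, v ≠ 0 → 0 < ∑ k, ∑ k', v k * Mm x k k' * v k' := by
  classical
  rcases Nat.eq_zero_or_pos n with hn | hn
  · refine ⟨Set.univ, isOpen_univ, Set.mem_univ _, ?_⟩
    intro x _ v hv
    exfalso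
    apply hv
    funext k
    exact absurd (k.isLt) (by omega)
  -- general case
  set q : (Fin n → ℝ) → (Fin n → ℝ) → ℝ :=
    fun x v => ∑ k, ∑ k', v k * Mm x k k' * v k' with hq
  have hqcont : ∀ x, Continuous (q x) := by
    intro x
    apply continuous_finset_sum
    intro k _
    apply continuous_finset_sum
    intro k' _
    exact ((continuous_apply k).mul continuous_const).mul (continuous_apply k')
  have hqhom : ∀ x (s : ℝ) v, q x (s • v) = s^2 * q x v := by
    intro x s v
    simp only [hq, Finset.mul_sum]
    refine Finset.sum_congr rfl fun k _ => Finset.sum_congr rfl fun k' _ => ?_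
    simp only [Pi.smul_apply, smul_eq_mul]
    ring
  have hsph : ∃ v₀ : Fin n → ℝ, v₀ ∈ Metric.sphere (0 : Fin n → ℝ) 1 := by
    refine ⟨Pi.single ⟨0, hn⟩ 1, ?_⟩
    rw [mem_sphere_zero_iff_norm]
    rw [Pi.norm_single]
    norm_num
  obtain ⟨v₀, hv₀⟩ := hsph
  obtain ⟨vm, hvmmem, hvmmin⟩ := (isCompact_sphere (0 : Fin n → ℝ) 1).exists_isMinOn
    ⟨v₀, hv₀⟩ (hqcont xs).continuousOn
  set ε := q xs vm with hε
  have hvmne : vm ≠ 0 := by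
    intro hz
    rw [hz, mem_sphere_zero_iff_norm, norm_zero] at hvmmem
    norm_num at hvmmem
  have hεpos : 0 < ε := hpd vm hvmne
  have hlow : ∀ v : Fin n → ℝ, ε * ‖v‖^2 ≤ q xs v := by
    intro v
    rcases eq_or_ne v 0 with rfl | hv
    · simp [hq]
    · have hnv : (0:ℝ) < ‖v‖ := norm_pos_iff.2 hv
      have hu : (‖v‖⁻¹ • v) ∈ Metric.sphere (0 : Fin n → ℝ) 1 := by
        rw [mem_sphere_zero_iff_norm, norm_smul, norm_inv, norm_norm,
          inv_mul_cancel₀ hnv.ne']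
      have h1 : ε ≤ q xs (‖v‖⁻¹ • v) := hvmmin hu
      rw [hqhom] at h1
      have h2 : q xs (v) = ‖v‖^2 * ((‖v‖⁻¹)^2 * q xs v) := by
        field_simp
      nlinarith [sq_nonneg ‖v‖]
  set D : (Fin n → ℝ) → ℝ := fun x => ∑ k, ∑ k', |Mm x k k' - Mm xs k k'| with hD
  have hDcont : Continuous D := by
    apply continuous_finset_sum
    intro k _
    apply continuous_finset_sum
    intro k' _
    exact ((hcont k k').sub continuous_const).abs
  refine ⟨D ⁻¹' Set.Iio (ε/2), (isOpen_Iio).preimage hDcont, ?_, ?_⟩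
  · simp [hD, Set.mem_preimage]
    positivity
  · intro x hx v hv
    have hnv : (0:ℝ) < ‖v‖ := norm_pos_iff.2 hv
    have hdiff : |q x v - q xs v| ≤ D x * ‖v‖^2 := by
      have h1 : q x v - q xs v = ∑ k, ∑ k', v k * (Mm x k k' - Mm xs k k') * v k' := by
        simp only [hq]
        rw [← Finset.sum_sub_distrib]
        refine Finset.sum_congr rfl fun k _ => ?_
        rw [← Finset.sum_sub_distrib]
        exact Finset.sum_congr rfl fun k' _ => by ring
      rw [h1, hD, Finset.sum_mul]
      calc |∑ k, ∑ k', v k * (Mm x k k' - Mm xs k k') * v k'|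
          ≤ ∑ k, |∑ k', v k * (Mm x k k' - Mm xs k k') * v k'| :=
            Finset.abs_sum_le_sum_abs _ _
        _ ≤ ∑ k, ∑ k', |v k * (Mm x k k' - Mm xs k k') * v k'| :=
            Finset.sum_le_sum fun k _ => Finset.abs_sum_le_sum_abs _ _
        _ ≤ ∑ k, (∑ k', |Mm x k k' - Mm xs k k'|) * ‖v‖^2 := by
            refine Finset.sum_le_sum fun k _ => ?_
            rw [Finset.sum_mul]
            refine Finset.sum_le_sum fun k' _ => ?_
            have hk : |v k| ≤ ‖v‖ := by
              have := norm_le_pi_norm v k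
              simpa [Real.norm_eq_abs] using this
            have hk' : |v k'| ≤ ‖v‖ := by
              have := norm_le_pi_norm v k'
              simpa [Real.norm_eq_abs] using this
            rw [abs_mul, abs_mul]
            have habs : (0:ℝ) ≤ |Mm x k k' - Mm xs k k'| := abs_nonneg _
            have hmm := mul_le_mul hk hk' (abs_nonneg (v k')) (norm_nonneg v)
            calc |v k| * |Mm x k k' - Mm xs k k'| * |v k'|
                = |Mm x k k' - Mm xs k k'| * (|v k| * |v k'|) := by ring
              _ ≤ |Mm x k k' - Mm xs k k'| * (‖v‖ * ‖v‖) :=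
                  mul_le_mul_of_nonneg_left hmm habs
              _ = |Mm x k k' - Mm xs k k'| * ‖v‖^2 := by ring
    have hxlt : D x < ε/2 := hx
    have hD0 : 0 ≤ D x := Finset.sum_nonneg fun k _ =>
      Finset.sum_nonneg fun k' _ => abs_nonneg _
    have hlo := hlow v
    have habs := abs_le.1 hdiff
    have hv2 : 0 < ‖v‖^2 := by positivity
    have h3 : D x * ‖v‖^2 < ε/2 * ‖v‖^2 := by nlinarith
    have h4 : 0 < ε/2 * ‖v‖^2 := by positivity
    show 0 < q x v
    linarith [habs.1]

open scoped BigOperators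

/-- Local Nichtnegativstellensatz: if `f ≥ 0` on `S`, `x*` is a zero of `f` in `S`, and the
regularity, strict complementarity and second-order sufficiency conditions hold at `x*`, then on
a neighbourhood of `x*` one has `f = φ₀ + Σ φᵢ gᵢ + Σ ψⱼ hⱼ` with each `φᵢ` a sum of squares of
`C^{p-2}` functions. -/
theorem local_nichtnegativstellensatz (n l m p : ℕ) (hp : 2 ≤ p)
    (f : (Fin n → ℝ) → ℝ) (g : Fin l → (Fin n → ℝ) → ℝ) (h : Fin m → (Fin n → ℝ) → ℝ)
    (hf : ContDiff ℝ p f) (hg : ∀ i, ContDiff ℝ p (g i)) (hh : ∀ j, ContDiff ℝ p (h j))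
    (S : Set (Fin n → ℝ))
    (hS : S = {x | (∀ i, 0 ≤ g i x) ∧ (∀ j, h j x = 0)})
    (hSne : S.Nonempty) (hfS : ∀ x ∈ S, 0 ≤ f x)
    (xs : Fin n → ℝ) (hxs : xs ∈ S) (hfxs : f xs = 0)
    -- regularity (LICQ) at `xs`
    (hreg : LinearIndependent ℝ
      (Sum.elim
        (fun i : {i : Fin l // g i xs = 0} => fun k => fderiv ℝ (g i.1) xs (Pi.single k 1))
        (fun j : Fin m => fun k => fderiv ℝ (h j) xs (Pi.single k 1))))
    -- KKT multipliers at `xs`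
    (lam : Fin l → ℝ) (nu : Fin m → ℝ)
    (hKKT : fderiv ℝ f xs = ∑ i, lam i • fderiv ℝ (g i) xs + ∑ j, nu j • fderiv ℝ (h j) xs)
    (hlam : ∀ i, 0 ≤ lam i) (hcomp : ∀ i, lam i * g i xs = 0)
    -- strict complementarity at `xs`
    (hstrict : ∀ i, 0 < lam i + g i xs)
    -- second-order sufficiency at `xs`
    (hsosc : ∀ v : Fin n → ℝ, v ≠ 0 →
      (∀ i : Fin l, g i xs = 0 → fderiv ℝ (g i) xs v = 0) →
      (∀ j, fderiv ℝ (h j) xs v = 0) →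
      0 < fderiv ℝ (fderiv ℝ (fun x => f x - ∑ i, lam i * g i x - ∑ j, nu j * h j x)) xs v v) :
    ∃ U : Set (Fin n → ℝ), IsOpen U ∧ xs ∈ U ∧
      ∃ (φ : Fin (l + 1) → (Fin n → ℝ) → ℝ) (ψ : Fin m → (Fin n → ℝ) → ℝ),
        (∀ i, ∃ (K : ℕ) (σ : Fin K → (Fin n → ℝ) → ℝ),
          (∀ k, ContDiffOn ℝ (p - 2 : ℕ) (σ k) U) ∧ ∀ x ∈ U, φ i x = ∑ k, (σ k x) ^ 2) ∧
        (∀ j, ContDiffOn ℝ (p - 2 : ℕ) (ψ j) U) ∧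
        ∀ x ∈ U, f x = φ 0 x + ∑ i : Fin l, φ i.succ x * g i x + ∑ j, ψ j x * h j x := by
  classical
  -- basic cast facts
  have hp1 : (1 : WithTop ℕ∞) ≤ (p : ℕ) := by exact_mod_cast Nat.one_le_of_lt hp
  have hp2 : (1 : WithTop ℕ∞) + 1 ≤ (p : ℕ) := by
    rw [show (1 : WithTop ℕ∞) + 1 = ((2:ℕ) : WithTop ℕ∞) by norm_cast]
    exact_mod_cast hp
  -- membership facts
  have hxsS : (∀ i, 0 ≤ g i xs) ∧ (∀ j, h j xs = 0) := by rw [hS] at hxs; exact hxs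
  -- weights
  set w : Fin l → ℝ := fun i => if g i xs = 0 then 1 else 0 with hwdef
  have hw01 : ∀ i, w i = 0 ∨ w i = 1 := by
    intro i; by_cases hgi : g i xs = 0 <;> simp [hwdef, hgi]
  have hwg : ∀ i, w i * g i xs = 0 := by
    intro i; by_cases hgi : g i xs = 0 <;> simp [hwdef, hgi]
  have hlam0 : ∀ i, g i xs ≠ 0 → lam i = 0 := by
    intro i hne
    rcases mul_eq_zero.1 (hcomp i) with h1 | h1
    · exact h1
    · exact absurd h1 hne
  have hlampos : ∀ i, g i xs = 0 → 0 < lam i := by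
    intro i h0
    have := hstrict i
    rw [h0, add_zero] at this
    exact this
  -- the Lagrangian
  set lag : (Fin n → ℝ) → ℝ :=
    fun x => f x - ∑ i, lam i * g i x - ∑ j, nu j * h j x with hlagdef
  have hlagC : ContDiff ℝ p lag := by
    apply ContDiff.sub
    apply ContDiff.sub hf
    · exact ContDiff.sum fun i _ => contDiff_const.mul (hg i)
    · exact ContDiff.sum fun j _ => contDiff_const.mul (hh j)
  have hlagxs : lag xs = 0 := by
    simp only [hlagdef]
    rw [hfxs]
    have h1 : ∑ i, lam i * g i xs = 0 := Finset.sum_eq_zero fun i _ => hcomp i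
    have h2 : ∑ j, nu j * h j xs = 0 := Finset.sum_eq_zero fun j _ => by
      rw [hxsS.2 j, mul_zero]
    rw [h1, h2]; ring
  -- first derivative of the Lagrangian
  have hgd : ∀ i x, HasFDerivAt (g i) (fderiv ℝ (g i) x) x :=
    fun i x => ((hg i).differentiable (lt_of_lt_of_le zero_lt_one hp1).ne' x).hasFDerivAt
  have hhd : ∀ j x, HasFDerivAt (h j) (fderiv ℝ (h j) x) x :=
    fun j x => ((hh j).differentiable (lt_of_lt_of_le zero_lt_one hp1).ne' x).hasFDerivAt
  have hfd : ∀ x, HasFDerivAt f (fderiv ℝ f x) x :=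
    fun x => (hf.differentiable (lt_of_lt_of_le zero_lt_one hp1).ne' x).hasFDerivAt
  have hlagd : ∀ x, HasFDerivAt lag
      (fderiv ℝ f x - ∑ i, lam i • fderiv ℝ (g i) x - ∑ j, nu j • fderiv ℝ (h j) x) x := by
    intro x
    apply HasFDerivAt.sub
    apply HasFDerivAt.sub (hfd x)
    · exact HasFDerivAt.fun_sum fun i _ => (hgd i x).const_mul (lam i)
    · exact HasFDerivAt.fun_sum fun j _ => (hhd j x).const_mul (nu j)
  have hDlag0 : fderiv ℝ lag xs = 0 := by
    rw [(hlagd xs).fderiv, hKKT]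
    abel
  -- second derivative of the Lagrangian and the Finsler constant
  set B2 := fderiv ℝ (fderiv ℝ lag) xs with hB2
  obtain ⟨c, hcpos, hc⟩ := finsler B2 w hw01
    (fun i => fderiv ℝ (g i) xs) (fun j => fderiv ℝ (h j) xs) (by
      intro v hv hgv hhv
      apply hsosc v hv
      · intro i hgi
        apply hgv i
        simp [hwdef, hgi]
      · exact hhv)
  -- the augmented function G
  set G : (Fin n → ℝ) → ℝ :=
    fun x => lag x + c * ∑ i, w i * (g i x)^2 + c * ∑ j, (h j x)^2 with hGdef
  have hGC : ContDiff ℝ p G := by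
    apply ContDiff.add
    apply ContDiff.add hlagC
    · exact contDiff_const.mul (ContDiff.sum fun i _ =>
        contDiff_const.mul ((hg i).pow 2))
    · exact contDiff_const.mul (ContDiff.sum fun j _ => (hh j).pow 2)
  have hGxs : G xs = 0 := by
    simp only [hGdef]
    rw [hlagxs]
    have h1 : ∑ i, w i * (g i xs)^2 = 0 := Finset.sum_eq_zero fun i _ => by
      linear_combination (g i xs) * (hwg i)
    have h2 : ∑ j, (h j xs)^2 = 0 := Finset.sum_eq_zero fun j _ => by
      rw [hxsS.2 j]; ring
    rw [h1, h2]; ring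
  -- explicit first derivative of G
  set Φ : (Fin n → ℝ) → ((Fin n → ℝ) →L[ℝ] ℝ) :=
    fun x => fderiv ℝ lag x + c • ∑ i, w i • ((2 * g i x) • fderiv ℝ (g i) x)
      + c • ∑ j, (2 * h j x) • fderiv ℝ (h j) x with hΦdef
  have hGd : ∀ x, HasFDerivAt G (Φ x) x := by
    intro x
    apply HasFDerivAt.add
    apply HasFDerivAt.add
    · exact (hlagC.differentiable (lt_of_lt_of_le zero_lt_one hp1).ne' x).hasFDerivAt
    · refine HasFDerivAt.const_mul (HasFDerivAt.fun_sum fun i _ => ?_) c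
      have hpow : HasFDerivAt (fun y => (g i y)^2)
          ((2 * g i x) • fderiv ℝ (g i) x) x := by
        have heq : (fun y => (g i y)^2) = fun y => g i y * g i y := by
          funext y; ring
        rw [heq]
        rw [two_mul, add_smul]
        exact (hgd i x).fun_mul (hgd i x)
      exact hpow.const_mul (w i)
    · refine HasFDerivAt.const_mul (HasFDerivAt.fun_sum fun j _ => ?_) c
      have heq : (fun y => (h j y)^2) = fun y => h j y * h j y := by
        funext y; ring
      show HasFDerivAt (fun y => (h j y)^2) ((2 * h j x) • fderiv ℝ (h j) x) x
      rw [heq]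
      rw [two_mul, add_smul]
      exact (hhd j x).fun_mul (hhd j x)
  have hfdG : fderiv ℝ G = Φ := funext fun x => (hGd x).fderiv
  have hΦxs : Φ xs = 0 := by
    simp only [hΦdef]
    rw [hDlag0]
    have h1 : ∀ i : Fin l, w i • ((2 * g i xs) • fderiv ℝ (g i) xs)
        = (0 : (Fin n → ℝ) →L[ℝ] ℝ) := by
      intro i
      rw [smul_smul]
      have : w i * (2 * g i xs) = 0 := by linear_combination 2 * (hwg i)
      rw [this, zero_smul]
    have h2 : ∀ j : Fin m, (2 * h j xs) • fderiv ℝ (h j) xs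
        = (0 : (Fin n → ℝ) →L[ℝ] ℝ) := by
      intro j
      rw [hxsS.2 j, mul_zero, zero_smul]
    simp only [h1, h2, Finset.sum_const_zero, smul_zero, add_zero, zero_add]
  -- second derivative of G at xs, applied twice
  have hDg2C : ∀ i, ContDiff ℝ 1 (fderiv ℝ (g i)) := fun i => (hg i).fderiv_right hp2
  have hDh2C : ∀ j, ContDiff ℝ 1 (fderiv ℝ (h j)) := fun j => (hh j).fderiv_right hp2
  have hDlagC : ContDiff ℝ 1 (fderiv ℝ lag) := hlagC.fderiv_right hp2
  have hΦd : HasFDerivAt Φ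
      (B2 + c • ∑ i, w i • ((2 * g i xs) • fderiv ℝ (fderiv ℝ (g i)) xs
            + ((2:ℝ) • fderiv ℝ (g i) xs).smulRight (fderiv ℝ (g i) xs))
        + c • ∑ j, ((2 * h j xs) • fderiv ℝ (fderiv ℝ (h j)) xs
            + ((2:ℝ) • fderiv ℝ (h j) xs).smulRight (fderiv ℝ (h j) xs))) xs := by
    apply HasFDerivAt.add
    apply HasFDerivAt.add
    · exact ((hDlagC.differentiable one_ne_zero) xs).hasFDerivAt
    · refine HasFDerivAt.fun_const_smul (HasFDerivAt.fun_sum fun i _ => ?_) c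
      have hsc : HasFDerivAt (fun y => 2 * g i y) ((2:ℝ) • fderiv ℝ (g i) xs) xs :=
        (hgd i xs).const_mul 2
      have hcl : HasFDerivAt (fderiv ℝ (g i)) (fderiv ℝ (fderiv ℝ (g i)) xs) xs :=
        (((hDg2C i).differentiable one_ne_zero) xs).hasFDerivAt
      exact (hsc.fun_smul hcl).fun_const_smul (w i)
    · refine HasFDerivAt.fun_const_smul (HasFDerivAt.fun_sum fun j _ => ?_) c
      have hsc : HasFDerivAt (fun y => 2 * h j y) ((2:ℝ) • fderiv ℝ (h j) xs) xs :=
        (hhd j xs).const_mul 2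
      have hcl : HasFDerivAt (fderiv ℝ (h j)) (fderiv ℝ (fderiv ℝ (h j)) xs) xs :=
        (((hDh2C j).differentiable one_ne_zero) xs).hasFDerivAt
      exact hsc.fun_smul hcl
  have hHvv : ∀ v : Fin n → ℝ, fderiv ℝ (fderiv ℝ G) xs v v
      = B2 v v + c * ∑ i, w i * (2 * (fderiv ℝ (g i) xs v)^2)
        + c * ∑ j, 2 * (fderiv ℝ (h j) xs v)^2 := by
    intro v
    rw [hfdG, hΦd.fderiv]
    simp only [ContinuousLinearMap.add_apply, ContinuousLinearMap.coe_smul',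
      Pi.smul_apply, ContinuousLinearMap.sum_apply, ContinuousLinearMap.smul_apply,
      ContinuousLinearMap.smulRight_apply, smul_eq_mul]
    congr 1
    congr 1
    · congr 1
      apply Finset.sum_congr rfl
      intro i _
      have hzero : w i * (2 * g i xs * (fderiv ℝ (fderiv ℝ (g i)) xs v v)) = 0 := by
        linear_combination (2 * (fderiv ℝ (fderiv ℝ (g i)) xs v v)) * (hwg i)
      linear_combination hzero
    · congr 1
      apply Finset.sum_congr rfl
      intro j _
      rw [hxsS.2 j]
      ring
  -- Hadamard expansion, twice
  obtain ⟨a, haC, haxs, haD, haeq⟩ := hadamard p (by omega) G hGC xs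
  have ha0 : ∀ k, a k xs = 0 := by
    intro k
    rw [haxs k, hfdG, hΦxs]
    rfl
  have hHa : ∀ k, ∃ bk : Fin n → (Fin n → ℝ) → ℝ,
      (∀ k', ContDiff ℝ ((p-1)-1 : ℕ) (bk k')) ∧
      (∀ k', bk k' xs = fderiv ℝ (a k) xs (Pi.single k' 1)) ∧
      (∀ x, a k x = a k xs + ∑ k', (x k' - xs k') * bk k' x) := by
    intro k
    obtain ⟨bk, h1, h2, _, h4⟩ := hadamard (p-1) (by omega) (a k) (haC k) xs
    exact ⟨bk, h1, h2, h4⟩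
  choose b hbC hbxs hbeq using hHa
  have hbC' : ∀ k k', ContDiff ℝ ((p-2 : ℕ) : WithTop ℕ∞) (b k k') := by
    intro k k'
    have : p - 1 - 1 = p - 2 := by omega
    rw [← this]
    exact hbC k k'
  -- symmetrized matrix
  set Mm : (Fin n → ℝ) → Fin n → Fin n → ℝ :=
    fun x k k' => (b k k' x + b k' k x)/2 with hMmdef
  have hMmC : ∀ k k', ContDiff ℝ ((p-2 : ℕ) : WithTop ℕ∞) (fun x => Mm x k k') :=
    fun k k' => ((hbC' k k').add (hbC' k' k)).div_const 2
  have hMmsym : ∀ x, ∀ k k', Mm x k k' = Mm x k' k := by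
    intro x k k'; simp only [hMmdef]; ring
  -- G as a quadratic form
  have hGexp : ∀ x, G x = ∑ k, ∑ k', (x k - xs k) * b k k' x * (x k' - xs k') := by
    intro x
    rw [haeq x, hGxs, zero_add]
    refine Finset.sum_congr rfl fun k _ => ?_
    rw [hbeq k x, ha0 k, zero_add, Finset.mul_sum]
    exact Finset.sum_congr rfl fun k' _ => by ring
  have hMsum : ∀ x, ∑ k, ∑ k', (x k - xs k) * Mm x k k' * (x k' - xs k') = G x := by
    intro x
    have hswap : ∑ k, ∑ k', (x k - xs k) * b k' k x * (x k' - xs k')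
        = ∑ k, ∑ k', (x k - xs k) * b k k' x * (x k' - xs k') := by
      rw [Finset.sum_comm]
      exact Finset.sum_congr rfl fun k _ => Finset.sum_congr rfl fun k' _ => by ring
    have hterm : ∀ k k', (x k - xs k) * Mm x k k' * (x k' - xs k')
        = (x k - xs k) * b k k' x * (x k' - xs k')/2
          + (x k - xs k) * b k' k x * (x k' - xs k')/2 := by
      intro k k'; simp only [hMmdef]; ring
    simp only [hterm]
    rw [hGexp x]
    simp only [Finset.sum_add_distrib]
    simp only [← Finset.sum_div]
    rw [hswap]
    ring
  -- value of Mm at xs against a vector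
  have hbxs' : ∀ k k', b k k' xs
      = (1/2) * fderiv ℝ (fderiv ℝ G) xs (Pi.single k' 1) (Pi.single k 1) := by
    intro k k'
    rw [hbxs k k', haD hp k k']
  have hquadxs : ∀ v : Fin n → ℝ,
      ∑ k, ∑ k', v k * Mm xs k k' * v k' = (1/2) * fderiv ℝ (fderiv ℝ G) xs v v := by
    intro v
    set H := fderiv ℝ (fderiv ℝ G) xs with hH
    have h1 : ∑ k, ∑ k', v k * H (Pi.single k 1) (Pi.single k' 1) * v k' = H v v :=
      (clm_bilin_expand H v v).symm
    have h2 : ∑ k, ∑ k', v k * H (Pi.single k' 1) (Pi.single k 1) * v k' = H v v := by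
      rw [Finset.sum_comm]
      rw [← h1]
      exact Finset.sum_congr rfl fun k _ => Finset.sum_congr rfl fun k' _ => by ring
    have hterm : ∀ k k', v k * Mm xs k k' * v k'
        = (1/2) * ((v k * H (Pi.single k' 1) (Pi.single k 1) * v k')/2
          + (v k * H (Pi.single k 1) (Pi.single k' 1) * v k')/2) := by
      intro k k'
      simp only [hMmdef]
      rw [hbxs' k k', hbxs' k' k]
      ring
    simp only [hterm]
    simp only [← Finset.mul_sum, Finset.sum_add_distrib, ← Finset.sum_div]
    rw [h1, h2]
    ring
  -- positivity of Mm at xs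
  have hMpdxs : ∀ v : Fin n → ℝ, v ≠ 0 → 0 < ∑ k, ∑ k', v k * Mm xs k k' * v k' := by
    intro v hv
    rw [hquadxs v, hHvv v]
    have hfin := hc v hv
    have h1 : 0 ≤ ∑ i, w i * (fderiv ℝ (g i) xs v)^2 := Finset.sum_nonneg fun i _ => by
      rcases hw01 i with hwi | hwi <;> rw [hwi] <;> [simp; simp] <;> positivity
    have h2 : 0 ≤ ∑ j, (fderiv ℝ (h j) xs v)^2 :=
      Finset.sum_nonneg fun j _ => sq_nonneg _
    have e1 : ∑ i, w i * (2 * (fderiv ℝ (g i) xs v)^2)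
        = 2 * ∑ i, w i * (fderiv ℝ (g i) xs v)^2 := by
      rw [Finset.mul_sum]; exact Finset.sum_congr rfl fun i _ => by ring
    have e2 : ∑ j, 2 * (fderiv ℝ (h j) xs v)^2
        = 2 * ∑ j, (fderiv ℝ (h j) xs v)^2 := by
      rw [Finset.mul_sum]
    rw [e1, e2]
    nlinarith [hcpos]
  -- neighbourhood where Mm is positive definite
  obtain ⟨U₀, hU₀open, hU₀mem, hU₀pd⟩ :=
    pd_nbhd Mm xs (fun k k' => (hMmC k k').continuous) hMpdxs
  -- neighbourhoods where the sqrt coefficients are positive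
  set Ui : Fin l → Set (Fin n → ℝ) :=
    fun i => if g i xs = 0 then {x | 0 < lam i - c * (w i * g i x)} else Set.univ
    with hUidef
  have hUiopen : ∀ i, IsOpen (Ui i) := by
    intro i
    simp only [hUidef]
    by_cases hgi : g i xs = 0
    · rw [if_pos hgi]
      have hcont : Continuous fun x => lam i - c * (w i * g i x) :=
        continuous_const.sub (continuous_const.mul (continuous_const.mul (hg i).continuous))
      exact isOpen_Ioi.preimage hcont
    · rw [if_neg hgi]; exact isOpen_univ
  have hUimem : ∀ i, xs ∈ Ui i := by
    intro i
    simp only [hUidef]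
    by_cases hgi : g i xs = 0
    · rw [if_pos hgi]
      have : lam i - c * (w i * g i xs) = lam i := by
        rw [hgi]; ring
      show 0 < lam i - c * (w i * g i xs)
      rw [this]
      exact hlampos i hgi
    · rw [if_neg hgi]; exact Set.mem_univ _
  set U : Set (Fin n → ℝ) := U₀ ∩ ⋂ i, Ui i with hUdef
  have hUopen : IsOpen U := hU₀open.inter (isOpen_iInter_of_finite hUiopen)
  have hUmem : xs ∈ U := ⟨hU₀mem, Set.mem_iInter.2 hUimem⟩
  -- sum of squares representation of G on U via Cholesky
  have hple : ((p - 2 : ℕ) : WithTop ℕ∞) ≤ (p : ℕ) := by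
    exact_mod_cast Nat.sub_le p 2
  obtain ⟨σ0, hσ0C, hσ0eq⟩ := cholesky (X := Fin n → ℝ) (p-2) n U Mm
    (fun k x => x k - xs k)
    (fun k k' => (hMmC k k').contDiffOn)
    (fun x _ k k' => hMmsym x k k')
    (fun x hx v hv => hU₀pd x hx.1 v hv)
    (fun k => (((ContinuousLinearMap.proj k : (Fin n → ℝ) →L[ℝ] ℝ).contDiff).sub
      contDiff_const).contDiffOn)
  refine ⟨U, hUopen, hUmem,
    Fin.cases G (fun i x => lam i - c * (w i * g i x)),
    fun j x => nu j - c * h j x, ?_, ?_, ?_⟩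
  · -- sums of squares
    intro i
    refine Fin.cases ?_ ?_ i
    · refine ⟨n, σ0, hσ0C, fun x hx => ?_⟩
      exact (hMsum x).symm.trans (hσ0eq x hx)
    · intro i'
      by_cases hgi : g i' xs = 0
      · refine ⟨1, fun _ x => Real.sqrt (lam i' - c * (w i' * g i' x)), ?_, ?_⟩
        · intro k
          have hin : ContDiffOn ℝ ((p-2 : ℕ) : WithTop ℕ∞)
              (fun x => lam i' - c * (w i' * g i' x)) U :=
            (contDiff_const.sub (contDiff_const.mul
              (contDiff_const.mul ((hg i').of_le hple)))).contDiffOn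
          refine hin.sqrt ?_
          intro x hx
          have hx2 := Set.mem_iInter.1 hx.2 i'
          simp only [hUidef, if_pos hgi] at hx2
          exact ne_of_gt hx2
        · intro x hx
          have hx2 := Set.mem_iInter.1 hx.2 i'
          simp only [hUidef, if_pos hgi] at hx2
          show lam i' - c * (w i' * g i' x) = _
          rw [Fin.sum_univ_one, Real.sq_sqrt (le_of_lt hx2)]
      · refine ⟨0, Fin.elim0, fun k => k.elim0, fun x hx => ?_⟩
        show lam i' - c * (w i' * g i' x) = _
        simp [hwdef, hgi, hlam0 i' hgi]
  · -- the ψ functions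
    intro j
    exact (contDiff_const.sub (contDiff_const.mul ((hh j).of_le hple))).contDiffOn
  · -- the identity on U
    intro x hx
    simp only [Fin.cases_zero, Fin.cases_succ]
    have e1 : c * (∑ i, w i * (g i x)^2)
        + ∑ i, (lam i - c * (w i * g i x)) * g i x - ∑ i, lam i * g i x = 0 := by
      rw [Finset.mul_sum, ← Finset.sum_add_distrib, ← Finset.sum_sub_distrib]
      exact Finset.sum_eq_zero fun i _ => by ring
    have e2 : c * (∑ j, (h j x)^2)
        + ∑ j, (nu j - c * h j x) * h j x - ∑ j, nu j * h j x = 0 := by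
      rw [Finset.mul_sum, ← Finset.sum_add_distrib, ← Finset.sum_sub_distrib]
      exact Finset.sum_eq_zero fun j _ => by ring
    have hGx : G x = f x - ∑ i, lam i * g i x - ∑ j, nu j * h j x
        + c * ∑ i, w i * (g i x)^2 + c * ∑ j, (h j x)^2 := by
      simp only [hGdef, hlagdef]
    linarith [e1, e2, hGx]
end

section
/- Suppose f − f* = φ₀ + Σᵢ φᵢ gᵢ + Σⱼ ψⱼ hⱼ on ℝⁿ with all functions C¹, each φᵢ (i = 0,…,l) a sum of squares of C¹ functions, and x* ∈ S a global minimizer of f on S with f(x*) = f*. Then ∇f(x*) = Σᵢ₌₁^l φᵢ(x*) ∇gᵢ(x*) + Σⱼ₌₁^m ψⱼ(x*) ∇hⱼ(x*). -/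
/-!
Evaluating the certificate at the feasible point `x*`, where `f(x*) = f*` and every `hⱼ` vanishes,
gives `φ₀(x*) + Σ φᵢ(x*) gᵢ(x*) = 0` with all terms nonnegative; hence `φ₀(x*) = 0` and
`φᵢ(x*) gᵢ(x*) = 0`. A nonnegative differentiable function has zero derivative where it vanishes,
so `∇φ₀(x*) = 0`, and in the product rule for each `φᵢ gᵢ` the term `gᵢ(x*) ∇φᵢ(x*)` drops out,
either because `gᵢ(x*) = 0` or because `∇φᵢ(x*) = 0`; likewise for `ψⱼ hⱼ` since `hⱼ(x*) = 0`.
-/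

variable {E : Type*} [NormedAddCommGroup E] [NormedSpace ℝ E]

theorem HasFDerivAt.mul_of_right_eq_zero {φ g : E → ℝ} {φ' g' : E →L[ℝ] ℝ} {x : E}
    (hφ : HasFDerivAt φ φ' x) (hg : HasFDerivAt g g' x) (hgx : g x = 0) :
    HasFDerivAt (fun y => φ y * g y) (φ x • g') x := by
  simpa [hgx] using hφ.fun_mul hg

theorem hasFDerivAt_zero_of_nonneg_of_eq_zero {φ : E → ℝ} {x : E}
    (hφ : DifferentiableAt ℝ φ x) (hnonneg : ∀ y, 0 ≤ φ y) (hx : φ x = 0) :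
    HasFDerivAt φ (0 : E →L[ℝ] ℝ) x := by
  have hmin : IsLocalMin φ x := Filter.Eventually.of_forall fun y => hx ▸ hnonneg y
  simpa [hmin.fderiv_eq_zero] using hφ.hasFDerivAt

def IsC1SumOfSquares (φ : E → ℝ) : Prop :=
  ∃ (K : ℕ) (σ : Fin K → E → ℝ), (∀ k, ContDiff ℝ 1 (σ k)) ∧ ∀ x, φ x = ∑ k, (σ k x) ^ 2

namespace IsC1SumOfSquares

variable {φ : E → ℝ}

theorem nonneg (hφ : IsC1SumOfSquares φ) (x : E) : 0 ≤ φ x := by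
  obtain ⟨K, σ, -, hφσ⟩ := hφ
  rw [hφσ]
  exact Finset.sum_nonneg fun k _ => sq_nonneg _

theorem differentiable (hφ : IsC1SumOfSquares φ) : Differentiable ℝ φ := by
  obtain ⟨K, σ, hσ, hφσ⟩ := hφ
  rw [funext hφσ]
  exact Differentiable.fun_sum fun k _ => ((hσ k).differentiable one_ne_zero).pow 2

theorem hasFDerivAt_zero_of_eq_zero (hφ : IsC1SumOfSquares φ) {x : E} (hx : φ x = 0) :
    HasFDerivAt φ (0 : E →L[ℝ] ℝ) x :=
  hasFDerivAt_zero_of_nonneg_of_eq_zero (hφ.differentiable x) hφ.nonneg hx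

theorem mul_hasFDerivAt_of_mul_eq_zero (hφ : IsC1SumOfSquares φ) {g : E → ℝ} {g' : E →L[ℝ] ℝ}
    {x : E} (hg : HasFDerivAt g g' x) (hx : φ x * g x = 0) :
    HasFDerivAt (fun y => φ y * g y) (φ x • g') x := by
  rcases mul_eq_zero.mp hx with hφx | hgx
  · simpa [hφx] using (hφ.hasFDerivAt_zero_of_eq_zero hφx).fun_mul hg
  · exact (hφ.differentiable x).hasFDerivAt.mul_of_right_eq_zero hg hgx

end IsC1SumOfSquares

theorem generalized_kkt_stationarity_general (n l m : ℕ)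
    (f φ₀ : (Fin n → ℝ) → ℝ) (g : Fin l → (Fin n → ℝ) → ℝ) (h : Fin m → (Fin n → ℝ) → ℝ)
    (φ : Fin l → (Fin n → ℝ) → ℝ) (ψ : Fin m → (Fin n → ℝ) → ℝ)
    (hg : ∀ i, ContDiff ℝ 1 (g i)) (hh : ∀ j, ContDiff ℝ 1 (h j))
    (hψ : ∀ j, ContDiff ℝ 1 (ψ j))
    (hφ₀sos : ∃ (K : ℕ) (σ : Fin K → (Fin n → ℝ) → ℝ),
      (∀ k, ContDiff ℝ 1 (σ k)) ∧ ∀ x, φ₀ x = ∑ k, (σ k x) ^ 2)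
    (hφsos : ∀ i, ∃ (K : ℕ) (σ : Fin K → (Fin n → ℝ) → ℝ),
      (∀ k, ContDiff ℝ 1 (σ k)) ∧ ∀ x, φ i x = ∑ k, (σ k x) ^ 2)
    (S : Set (Fin n → ℝ))
    (hS : S = {x | (∀ i, 0 ≤ g i x) ∧ (∀ j, h j x = 0)})
    (fstar : ℝ)
    (hid : ∀ x, f x - fstar = φ₀ x + ∑ i, φ i x * g i x + ∑ j, ψ j x * h j x)
    (xs : Fin n → ℝ) (hxs : xs ∈ S) (hfxs : f xs = fstar) :
    fderiv ℝ f xs = ∑ i, φ i xs • fderiv ℝ (g i) xs + ∑ j, ψ j xs • fderiv ℝ (h j) xs := by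
  have hφ₀ : IsC1SumOfSquares φ₀ := hφ₀sos
  have hφ : ∀ i, IsC1SumOfSquares (φ i) := hφsos
  obtain ⟨hgxs, hhxs⟩ : (∀ i, 0 ≤ g i xs) ∧ ∀ j, h j xs = 0 := by
    rwa [hS] at hxs
  have hterm_nonneg : ∀ i ∈ Finset.univ, 0 ≤ φ i xs * g i xs :=
    fun i _ => mul_nonneg ((hφ i).nonneg xs) (hgxs i)
  have hcert_xs : φ₀ xs + ∑ i, φ i xs * g i xs = 0 := by
    simpa [hfxs, hhxs] using (hid xs).symm
  obtain ⟨hφ₀xs, hsum⟩ :=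
    (add_eq_zero_iff_of_nonneg (hφ₀.nonneg xs) (Finset.sum_nonneg hterm_nonneg)).mp hcert_xs
  have hcompl : ∀ i, φ i xs * g i xs = 0 := fun i =>
    (Finset.sum_eq_zero_iff_of_nonneg hterm_nonneg).mp hsum i (Finset.mem_univ i)
  have hdiff : ∀ {u : (Fin n → ℝ) → ℝ}, ContDiff ℝ 1 u → HasFDerivAt u (fderiv ℝ u xs) xs :=
    fun hu => (hu.differentiable one_ne_zero xs).hasFDerivAt
  have hφg : HasFDerivAt (fun x => ∑ i, φ i x * g i x) (∑ i, φ i xs • fderiv ℝ (g i) xs) xs :=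
    HasFDerivAt.fun_sum fun i _ =>
      (hφ i).mul_hasFDerivAt_of_mul_eq_zero (hdiff (hg i)) (hcompl i)
  have hψh : HasFDerivAt (fun x => ∑ j, ψ j x * h j x) (∑ j, ψ j xs • fderiv ℝ (h j) xs) xs :=
    HasFDerivAt.fun_sum fun j _ => (hdiff (hψ j)).mul_of_right_eq_zero (hdiff (hh j)) (hhxs j)
  have hcert := (((hφ₀.hasFDerivAt_zero_of_eq_zero hφ₀xs).fun_add hφg).fun_add hψh).const_add fstar
  rw [show f = _ from funext fun x => eq_add_of_sub_eq' (hid x), hcert.fderiv, zero_add]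

/-- Generalized KKT stationarity: if `f - f* = φ₀ + Σ φᵢ gᵢ + Σ ψⱼ hⱼ` with each `φᵢ` a sum of
squares of `C¹` functions, and `x*` is a global minimizer of `f` on `S`, then
`∇f(x*) = Σ φᵢ(x*) ∇gᵢ(x*) + Σ ψⱼ(x*) ∇hⱼ(x*)`. -/
theorem generalized_kkt_stationarity (n l m : ℕ)
    (f φ₀ : (Fin n → ℝ) → ℝ) (g : Fin l → (Fin n → ℝ) → ℝ) (h : Fin m → (Fin n → ℝ) → ℝ)
    (φ : Fin l → (Fin n → ℝ) → ℝ) (ψ : Fin m → (Fin n → ℝ) → ℝ)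
    (hf : ContDiff ℝ 1 f) (hg : ∀ i, ContDiff ℝ 1 (g i)) (hh : ∀ j, ContDiff ℝ 1 (h j))
    (hψ : ∀ j, ContDiff ℝ 1 (ψ j))
    (hφ₀sos : ∃ (K : ℕ) (σ : Fin K → (Fin n → ℝ) → ℝ),
      (∀ k, ContDiff ℝ 1 (σ k)) ∧ ∀ x, φ₀ x = ∑ k, (σ k x) ^ 2)
    (hφsos : ∀ i, ∃ (K : ℕ) (σ : Fin K → (Fin n → ℝ) → ℝ),
      (∀ k, ContDiff ℝ 1 (σ k)) ∧ ∀ x, φ i x = ∑ k, (σ k x) ^ 2)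
    (S : Set (Fin n → ℝ))
    (hS : S = {x | (∀ i, 0 ≤ g i x) ∧ (∀ j, h j x = 0)})
    (fstar : ℝ)
    (hid : ∀ x, f x - fstar = φ₀ x + ∑ i, φ i x * g i x + ∑ j, ψ j x * h j x)
    (xs : Fin n → ℝ) (hxs : xs ∈ S)
    (hmin : ∀ x ∈ S, fstar ≤ f x) (hfxs : f xs = fstar) :
    fderiv ℝ f xs = ∑ i, φ i xs • fderiv ℝ (g i) xs + ∑ j, ψ j xs • fderiv ℝ (h j) xs :=
  generalized_kkt_stationarity_general n l m f φ₀ g h φ ψ hg hh hψ hφ₀sos hφsos S hS fstar hid xs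
    hxs hfxs
end
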